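/- Let A be a skew-symmetric payoff matrix on Fin N whose pure strategies are partitioned into a nonempty set Π_eq and its complement Π_out, and suppose there is r > 0 such that A i ρ ≥ r for every i ∈ Π_eq and ρ ∈ Π_out, while |A i j| < r for all i, j ∈ Π_eq. Assume nondegeneracy: for every nonempty E ⊆ Π_eq, the zero-sum matrix game in which the row player mixes over E and the column player mixes over Π_eq (row payoff given by A) has a unique pair of optimal mixed strategies. If P ⊆ Fin N is a population such that E = P ∩ Π_eq is nonempty and a proper subset of Π_eq, and PE(P) > 0, then there exists a missing support strategy π* ∈ Π_eq \ E with PE(P ∪ {π*}) < PE(P). -/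

import Mathlib

/-! Every strategy of `Peq` beats every strategy outside it by at least `r`, while payoffs
inside `Peq` stay below `r`; so against a mixture supported in `Peq` the best responses lie in
`Peq`, and mass outside `Peq` only helps the exploiter. Hence `PE P = -v`, where `v` is the
value of the game with rows `E = P ∩ Peq` and columns `Peq`, and the minimax column strategy
`y` of that game (Sion's theorem gives strong duality) certifies the lower bound.
If no `π ∈ Peq \ E` lowered `PE`, the game with rows `insert π E` would have the same value,
so its minimax column strategy would also be minimax for `E`, hence equal to `y` by
nondegeneracy. Then every `π ∈ Peq` earns at most `v < 0` against `y`, contradicting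
`yᵀ A y = 0` for skew-symmetric `A`. -/

/-- Payoff of pure strategy `i` against mixed strategy `σ`: `(Aσ) i = ∑ j, A i j * σ j`. -/
noncomputable def pay {N : ℕ} (A : Fin N → Fin N → ℝ) (σ : Fin N → ℝ) (i : Fin N) : ℝ :=
  ∑ j, A i j * σ j

/-- `max_i (Aσ) i`. -/
noncomputable def maxPay {N : ℕ} (A : Fin N → Fin N → ℝ) (σ : Fin N → ℝ) : ℝ :=
  ⨆ i, pay A σ i

/-- `σ` is a mixed strategy supported inside `P`. -/
def SuppIn {N : ℕ} (P : Set (Fin N)) (σ : Fin N → ℝ) : Prop :=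
  σ ∈ stdSimplex ℝ (Fin N) ∧ ∀ j ∉ P, σ j = 0

/-- Population exploitability of a population `P`:
the least value of `max_i (Aσ) i` over mixed strategies supported in `P`. -/
noncomputable def PE {N : ℕ} (A : Fin N → Fin N → ℝ) (P : Set (Fin N)) : ℝ :=
  sInf (maxPay A '' {σ | SuppIn P σ})

/-- `i` is a best response to `σ`. -/
def IsBR {N : ℕ} (A : Fin N → Fin N → ℝ) (σ : Fin N → ℝ) (i : Fin N) : Prop :=
  pay A σ i = maxPay A σ

/-- Guaranteed payoff of a row mixture `x` against the column strategy set `C`: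
`min_{j ∈ C} ∑ i, x i * A i j`. -/
noncomputable def rowGuarantee {N : ℕ} (A : Fin N → Fin N → ℝ) (C : Set (Fin N))
    (x : Fin N → ℝ) : ℝ :=
  sInf {v | ∃ j ∈ C, v = ∑ i, x i * A i j}

/-- Threat value of a column mixture `y` against the row strategy set `R`:
`max_{i ∈ R} ∑ j, A i j * y j`. -/
noncomputable def colThreat {N : ℕ} (A : Fin N → Fin N → ℝ) (R : Set (Fin N))
    (y : Fin N → ℝ) : ℝ :=
  sSup {v | ∃ i ∈ R, v = ∑ j, A i j * y j}

/-- `(x, y)` is an optimal pair of the zero-sum matrix game with row strategy set `R`,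
column strategy set `C` and row payoff `A`: `x` is a maximin row mixture and `y` a
minimax column mixture. -/
def OptimalPair {N : ℕ} (A : Fin N → Fin N → ℝ) (R C : Set (Fin N))
    (x y : Fin N → ℝ) : Prop :=
  SuppIn R x ∧ SuppIn C y ∧
  (∀ x', SuppIn R x' → rowGuarantee A C x' ≤ rowGuarantee A C x) ∧
  (∀ y', SuppIn C y' → colThreat A R y ≤ colThreat A R y')

variable {N : ℕ}

namespace SuppIn

variable {S T : Set (Fin N)} {σ f : Fin N → ℝ} {b : ℝ}

lemma mono (hST : S ⊆ T) (hσ : SuppIn S σ) : SuppIn T σ :=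
  ⟨hσ.1, fun j hj => hσ.2 j fun hjS => hj (hST hjS)⟩

lemma sum_mul_le (hσ : SuppIn S σ) (hf : ∀ j ∈ S, f j ≤ b) : ∑ j, σ j * f j ≤ b :=
  calc ∑ j, σ j * f j ≤ ∑ j, σ j * b := by
        refine Finset.sum_le_sum fun j _ => ?_
        by_cases hj : j ∈ S
        · exact mul_le_mul_of_nonneg_left (hf j hj) (hσ.1.1 j)
        · simp [hσ.2 j hj]
    _ = b := by rw [← Finset.sum_mul, hσ.1.2, one_mul]

lemma le_sum_mul (hσ : SuppIn S σ) (hf : ∀ j ∈ S, b ≤ f j) : b ≤ ∑ j, σ j * f j := by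
  have := hσ.sum_mul_le (f := fun j => -f j) (b := -b) fun j hj => neg_le_neg (hf j hj)
  simpa [Finset.sum_neg_distrib] using this

end SuppIn

lemma suppIn_single {S : Set (Fin N)} {j : Fin N} (hj : j ∈ S) : SuppIn S (Pi.single j 1) :=
  ⟨single_mem_stdSimplex ℝ j, fun k hk => Pi.single_eq_of_ne (by rintro rfl; exact hk hj) 1⟩

lemma convex_setOf_suppIn (S : Set (Fin N)) : Convex ℝ {σ | SuppIn S σ} := by
  intro σ hσ τ hτ a b ha hb hab
  refine ⟨convex_stdSimplex ℝ (Fin N) hσ.1 hτ.1 ha hb hab, fun j hj => ?_⟩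
  simp [hσ.2 j hj, hτ.2 j hj]

lemma isCompact_setOf_suppIn (S : Set (Fin N)) : IsCompact {σ | SuppIn S σ} := by
  refine (isCompact_stdSimplex ℝ (Fin N)).of_isClosed_subset ?_ fun σ hσ => hσ.1
  have : {σ | SuppIn S σ} = stdSimplex ℝ (Fin N) ∩ ⋂ j ∈ Sᶜ, {σ | σ j = 0} := by
    ext σ; simp [SuppIn]
  rw [this]
  exact (isClosed_stdSimplex ℝ (Fin N)).inter <|
    isClosed_biInter fun j _ => isClosed_eq (continuous_apply j) continuous_const

section MatrixGame

variable {A : Fin N → Fin N → ℝ} {R C : Set (Fin N)} {x y σ : Fin N → ℝ} {b : ℝ}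

lemma finite_setOf_exists_mem_eq (S : Set (Fin N)) (g : Fin N → ℝ) :
    {v | ∃ j ∈ S, v = g j}.Finite :=
  (S.toFinite.image g).subset fun _ ⟨j, hj, hv⟩ => ⟨j, hj, hv.symm⟩

lemma rowGuarantee_le {j : Fin N} (hj : j ∈ C) : rowGuarantee A C x ≤ ∑ i, x i * A i j :=
  csInf_le (finite_setOf_exists_mem_eq C _).bddBelow ⟨j, hj, rfl⟩

lemma le_rowGuarantee (hC : C.Nonempty) (h : ∀ j ∈ C, b ≤ ∑ i, x i * A i j) :
    b ≤ rowGuarantee A C x :=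
  le_csInf (hC.elim fun j hj => ⟨_, j, hj, rfl⟩) fun _ ⟨j, hj, hv⟩ => hv ▸ h j hj

lemma pay_le_colThreat {i : Fin N} (hi : i ∈ R) : pay A y i ≤ colThreat A R y :=
  le_csSup (finite_setOf_exists_mem_eq R _).bddAbove ⟨i, hi, rfl⟩

lemma colThreat_le (hR : R.Nonempty) (h : ∀ i ∈ R, pay A y i ≤ b) : colThreat A R y ≤ b :=
  csSup_le (hR.elim fun i hi => ⟨_, i, hi, rfl⟩) fun _ ⟨i, hi, hv⟩ => hv ▸ h i hi

lemma colThreat_mono {R' : Set (Fin N)} (hR : R.Nonempty) (hRR' : R ⊆ R') :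
    colThreat A R y ≤ colThreat A R' y :=
  colThreat_le hR fun _ hi => pay_le_colThreat (hRR' hi)

lemma pay_le_maxPay (i : Fin N) : pay A σ i ≤ maxPay A σ :=
  le_ciSup (Set.finite_range _).bddAbove i

lemma sum_mul_pay (x y : Fin N → ℝ) :
    ∑ i, x i * pay A y i = ∑ j, y j * ∑ i, x i * A i j := by
  simp only [pay, Finset.mul_sum]
  rw [Finset.sum_comm]
  exact Finset.sum_congr rfl fun _ _ => Finset.sum_congr rfl fun _ _ => by ring

lemma rowGuarantee_le_colThreat (hx : SuppIn R x) (hy : SuppIn C y) :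
    rowGuarantee A C x ≤ colThreat A R y :=
  calc rowGuarantee A C x ≤ ∑ j, y j * ∑ i, x i * A i j :=
        hy.le_sum_mul fun _ hj => rowGuarantee_le hj
    _ = ∑ i, x i * pay A y i := (sum_mul_pay x y).symm
    _ ≤ colThreat A R y := hx.sum_mul_le fun _ hi => pay_le_colThreat hi

end MatrixGame

section Minimax

variable {A : Fin N → Fin N → ℝ} {R C : Set (Fin N)} {x y x' y' : Fin N → ℝ}

lemma exists_colThreat_le_rowGuarantee (hR : R.Nonempty) (hC : C.Nonempty) :
    ∃ x, SuppIn R x ∧ ∃ y, SuppIn C y ∧ colThreat A R y ≤ rowGuarantee A C x := by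
  let B : (Fin N → ℝ) →ₗ[ℝ] (Fin N → ℝ) →ₗ[ℝ] ℝ :=
    Matrix.toLinearMap₂' ℝ (Matrix.of A)
  have hB (x y : Fin N → ℝ) : B x y = ∑ i, x i * pay A y i := by
    rw [Matrix.toLinearMap₂'_apply']; rfl
  obtain ⟨y, hy, x, hx, hsaddle⟩ := Sion.exists_isSaddlePointOn (f := fun y x => B x y)
    (hC.elim fun j hj => ⟨_, suppIn_single hj⟩) (convex_setOf_suppIn C)
    (isCompact_setOf_suppIn C)
    (fun x _ => (B x).continuous_of_finiteDimensional.lowerSemicontinuous.lowerSemicontinuousOn _)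
    (fun x _ => ((B x).convexOn (convex_setOf_suppIn C)).quasiconvexOn)
    (convex_setOf_suppIn R) (hR.elim fun i hi => ⟨_, suppIn_single hi⟩)
    (isCompact_setOf_suppIn R)
    (fun y _ =>
      (B.flip y).continuous_of_finiteDimensional.upperSemicontinuous.upperSemicontinuousOn _)
    (fun y _ => ((B.flip y).concaveOn (convex_setOf_suppIn R)).quasiconcaveOn)
  refine ⟨x, hx, y, hy, colThreat_le hR fun i hi => le_rowGuarantee hC fun j hj => ?_⟩
  have := hsaddle _ (suppIn_single hj) _ (suppIn_single hi)
  simpa [hB, pay, Pi.single_apply] using this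

namespace OptimalPair

lemma rowGuarantee_eq_colThreat (hR : R.Nonempty) (hC : C.Nonempty)
    (hxy : OptimalPair A R C x y) : rowGuarantee A C x = colThreat A R y := by
  obtain ⟨x₀, hx₀, y₀, hy₀, hle⟩ := exists_colThreat_le_rowGuarantee (A := A) hR hC
  refine le_antisymm (rowGuarantee_le_colThreat hxy.1 hxy.2.1) ?_
  calc colThreat A R y ≤ colThreat A R y₀ := hxy.2.2.2 y₀ hy₀
    _ ≤ rowGuarantee A C x₀ := hle
    _ ≤ rowGuarantee A C x := hxy.2.2.1 x₀ hx₀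

lemma pay_le_rowGuarantee_of_superset {R' : Set (Fin N)} (hR : R.Nonempty) (hC : C.Nonempty)
    (hRR' : R ⊆ R') (hxy : OptimalPair A R C x y)
    (huniq : ∀ p : (Fin N → ℝ) × (Fin N → ℝ), OptimalPair A R C p.1 p.2 → p = (x, y))
    (hxy' : OptimalPair A R' C x' y') (hle : rowGuarantee A C x' ≤ rowGuarantee A C x)
    {i : Fin N} (hi : i ∈ R') : pay A y i ≤ rowGuarantee A C x := by
  have hval : colThreat A R' y' = rowGuarantee A C x :=
    (hxy'.rowGuarantee_eq_colThreat (hR.mono hRR') hC).symm.trans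
      (le_antisymm hle (hxy'.2.2.1 x (hxy.1.mono hRR')))
  have hy' : OptimalPair A R C x y' := by
    refine ⟨hxy.1, hxy'.2.1, hxy.2.2.1, fun y'' hy'' => ?_⟩
    calc colThreat A R y' ≤ colThreat A R' y' := colThreat_mono hR hRR'
      _ = colThreat A R y := hval.trans (hxy.rowGuarantee_eq_colThreat hR hC)
      _ ≤ colThreat A R y'' := hxy.2.2.2 y'' hy''
  obtain rfl : y' = y := congrArg Prod.snd (huniq (x, y') hy')
  exact hval ▸ pay_le_colThreat hi

end OptimalPair

end Minimax

section Skew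

variable {A : Fin N → Fin N → ℝ} (hA : ∀ i j, A j i = -A i j)
include hA

lemma sum_mul_eq_neg_pay (x : Fin N → ℝ) (j : Fin N) : ∑ i, x i * A i j = -pay A x j := by
  rw [pay, ← Finset.sum_neg_distrib]
  exact Finset.sum_congr rfl fun i _ => by rw [hA j i]; ring

lemma colThreat_eq_neg_rowGuarantee {C : Set (Fin N)} (hC : C.Nonempty) (σ : Fin N → ℝ) :
    colThreat A C σ = -rowGuarantee A C σ := by
  refine le_antisymm (colThreat_le hC fun i hi => ?_)
    (neg_le.mp (le_rowGuarantee hC fun j hj => ?_))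
  · have := rowGuarantee_le (A := A) (x := σ) hi
    rw [sum_mul_eq_neg_pay hA] at this
    linarith
  · rw [sum_mul_eq_neg_pay hA]
    exact neg_le_neg (pay_le_colThreat hj)

lemma sum_mul_pay_eq_neg (x y : Fin N → ℝ) :
    ∑ i, x i * pay A y i = -∑ j, y j * pay A x j := by
  rw [sum_mul_pay]
  simp only [sum_mul_eq_neg_pay hA, mul_neg, Finset.sum_neg_distrib]

lemma sum_mul_pay_self (y : Fin N → ℝ) : ∑ i, y i * pay A y i = 0 := by
  linarith [sum_mul_pay_eq_neg hA y y]

end Skew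

section Population

variable {A : Fin N → Fin N → ℝ} {Peq : Set (Fin N)} {r : ℝ}
  (hA : ∀ i j, A j i = -A i j) (hout : ∀ i ∈ Peq, ∀ ρ ∉ Peq, r ≤ A i ρ)
  (hin : ∀ i ∈ Peq, ∀ j ∈ Peq, |A i j| < r)

include hA hout hin in
lemma pay_le_colThreat_of_not_mem_diff {E : Set (Fin N)} {σ : Fin N → ℝ}
    (hσ : SuppIn Peq σ) (hE : E.Nonempty) (hEPeq : E ⊆ Peq) {i : Fin N} (hi : i ∉ Peq \ E) :
    pay A σ i ≤ colThreat A E σ := by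
  by_cases hiE : i ∈ E
  · exact pay_le_colThreat hiE
  obtain ⟨e, he⟩ := hE
  have hiPeq : i ∉ Peq := fun h => hi ⟨h, hiE⟩
  calc pay A σ i = ∑ j, σ j * A i j := by simp only [pay, mul_comm]
    _ ≤ -r := hσ.sum_mul_le fun j hj => by linarith [hA i j, hout j hj i hiPeq]
    _ ≤ ∑ j, σ j * A e j := hσ.le_sum_mul fun j hj => (abs_lt.mp (hin e (hEPeq he) j hj)).1.le
    _ = pay A σ e := by simp only [pay, mul_comm]
    _ ≤ colThreat A E σ := pay_le_colThreat he

include hA hout hin in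
lemma maxPay_eq_neg_rowGuarantee {σ : Fin N → ℝ} (hσ : SuppIn Peq σ) (hPeq : Peq.Nonempty) :
    maxPay A σ = -rowGuarantee A Peq σ := by
  have : Nonempty (Fin N) := hPeq.to_subtype.map Subtype.val
  rw [← colThreat_eq_neg_rowGuarantee hA hPeq]
  refine le_antisymm (ciSup_le fun i => ?_) (colThreat_le hPeq fun i _ => pay_le_maxPay i)
  exact pay_le_colThreat_of_not_mem_diff hA hout hin hσ hPeq le_rfl (by simp)

include hA hout hin in
lemma neg_colThreat_le_maxPay {P : Set (Fin N)} {y σ : Fin N → ℝ} (hy : SuppIn Peq y)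
    (hσ : SuppIn P σ) (hE : (P ∩ Peq).Nonempty) :
    -colThreat A (P ∩ Peq) y ≤ maxPay A σ := by
  have hpay : ∑ j, σ j * pay A y j ≤ colThreat A (P ∩ Peq) y :=
    hσ.sum_mul_le fun j hj => pay_le_colThreat_of_not_mem_diff hA hout hin hy hE
      Set.inter_subset_right fun h => h.2 ⟨hj, h.1⟩
  have hmax : ∑ i, y i * pay A σ i ≤ maxPay A σ := hy.sum_mul_le fun i _ => pay_le_maxPay i
  linarith [sum_mul_pay_eq_neg hA y σ]

include hA hout hin in
lemma PE_eq_neg_rowGuarantee {P : Set (Fin N)} (hE : (P ∩ Peq).Nonempty) {x y : Fin N → ℝ}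
    (hxy : OptimalPair A (P ∩ Peq) Peq x y) : PE A P = -rowGuarantee A Peq x := by
  have hPeq : Peq.Nonempty := hE.mono Set.inter_subset_right
  have hmaxPay : maxPay A x = -rowGuarantee A Peq x :=
    maxPay_eq_neg_rowGuarantee hA hout hin (hxy.1.mono Set.inter_subset_right) hPeq
  have hlower : ∀ v ∈ maxPay A '' {σ | SuppIn P σ}, -rowGuarantee A Peq x ≤ v := by
    rintro _ ⟨σ, hσ, rfl⟩
    rw [hxy.rowGuarantee_eq_colThreat hE hPeq]
    exact neg_colThreat_le_maxPay hA hout hin hxy.2.1 hσ hE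
  have hx : x ∈ {σ | SuppIn P σ} := hxy.1.mono Set.inter_subset_left
  exact le_antisymm (hmaxPay ▸ csInf_le ⟨_, hlower⟩ ⟨x, hx, rfl⟩)
    (le_csInf ⟨_, x, hx, rfl⟩ hlower)

end Population

theorem stmt6_general {N : ℕ} (A : Fin N → Fin N → ℝ) (hA : ∀ i j, A j i = -A i j)
    (Peq : Set (Fin N)) (r : ℝ)
    (hout : ∀ i ∈ Peq, ∀ ρ ∉ Peq, r ≤ A i ρ)
    (hin : ∀ i ∈ Peq, ∀ j ∈ Peq, |A i j| < r)
    (hnd : ∀ E : Set (Fin N), E.Nonempty → E ⊆ Peq →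
      ∃! p : (Fin N → ℝ) × (Fin N → ℝ), OptimalPair A E Peq p.1 p.2)
    (P : Set (Fin N)) (hE : (P ∩ Peq).Nonempty)
    (hPE : 0 < PE A P) :
    ∃ πstar ∈ Peq \ (P ∩ Peq), PE A (P ∪ {πstar}) < PE A P := by
  have hPeq : Peq.Nonempty := hE.mono Set.inter_subset_right
  obtain ⟨⟨x, y⟩, hxy, huniq⟩ := hnd (P ∩ Peq) hE Set.inter_subset_right
  have hPE_eq := PE_eq_neg_rowGuarantee hA hout hin hE hxy
  by_contra! hcon
  have hpay : ∀ i ∈ Peq, pay A y i ≤ rowGuarantee A Peq x := by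
    intro i hi
    have hinsert : (P ∪ {i}) ∩ Peq = insert i (P ∩ Peq) := by
      rw [Set.union_singleton, Set.insert_inter_of_mem hi]
    obtain ⟨⟨x', y'⟩, hxy', -⟩ := hnd (insert i (P ∩ Peq)) (Set.insert_nonempty _ _)
      (Set.insert_subset hi Set.inter_subset_right)
    refine hxy.pay_le_rowGuarantee_of_superset hE hPeq (Set.subset_insert _ _) huniq hxy' ?_
      (Set.mem_insert _ _)
    by_cases hiE : i ∈ P ∩ Peq
    · exact hxy.2.2.1 x' (Set.insert_eq_of_mem hiE ▸ hxy'.1)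
    · have := hcon i ⟨hi, hiE⟩
      rw [hPE_eq, PE_eq_neg_rowGuarantee hA hout hin (hinsert ▸ Set.insert_nonempty _ _)
        (hinsert ▸ hxy')] at this
      linarith
  linarith [sum_mul_pay_self hA y, hxy.2.1.sum_mul_le hpay]

/-- under the `Π_eq`/`Π_out` structure with margin `r` and
nondegeneracy, if `E = P ∩ Π_eq` is nonempty and a proper subset of `Π_eq` and
`PE(P) > 0`, then some missing support strategy `π* ∈ Π_eq \ E` strictly decreases
PE when added. -/
theorem stmt6 {N : ℕ} (A : Fin N → Fin N → ℝ) (hA : ∀ i j, A j i = -A i j)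
    (Peq : Set (Fin N)) (hne : Peq.Nonempty) (r : ℝ) (hr : 0 < r)
    (hout : ∀ i ∈ Peq, ∀ ρ ∉ Peq, r ≤ A i ρ)
    (hin : ∀ i ∈ Peq, ∀ j ∈ Peq, |A i j| < r)
    (hnd : ∀ E : Set (Fin N), E.Nonempty → E ⊆ Peq →
      ∃! p : (Fin N → ℝ) × (Fin N → ℝ), OptimalPair A E Peq p.1 p.2)
    (P : Set (Fin N)) (hE : (P ∩ Peq).Nonempty) (hEss : P ∩ Peq ⊂ Peq)
    (hPE : 0 < PE A P) :
    ∃ πstar ∈ Peq \ (P ∩ Peq), PE A (P ∪ {πstar}) < PE A P :=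
  stmt6_general A hA Peq r hout hin hnd P hE hPE
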